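/- In ℤ[μ⃗][[t₁,t₂]], there is a unit p(t₁,t₂) (a power series with constant term 1) such that 1/x⟨t₂⟩ - 1/x⟨t₁⟩ = -(t₂-t₁)(t₂'-t₁)·p(t₁,t₂), where t₂' is the involution series evaluated at t₂. Moreover p(t₁,t₂) = 1 + μ₁t₁ + μ₂t₂² + (μ₂+μ₁²)t₁² + μ₁μ₂t₂³ + ..., and setting t₂ = 0 gives p(t₁,0) = (1/x⟨t₁⟩)/t₁². -/

import Mathlib

noncomputable section

/-- The coefficient ring `ℤ[μ₁,μ₂,μ₃,μ₄,μ₆]`. -/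
abbrev CoefRing : Type := MvPolynomial (Fin 5) ℤ

def μ1 : CoefRing := MvPolynomial.X 0
def μ2 : CoefRing := MvPolynomial.X 1
def μ3 : CoefRing := MvPolynomial.X 2
def μ4 : CoefRing := MvPolynomial.X 3
def μ6 : CoefRing := MvPolynomial.X 4

open PowerSeries in
/-- The functional equation `s = (1 + μ₂s + μ₄s² + μ₆s³)t² + (μ₁s + μ₃s²)t`
satisfied by `s = 1/x` in the arithmetic parameter `t = -x/y` of the curve
`y² + (μ₁x+μ₃)y = x³ + μ₂x² + μ₄x + μ₆`. -/
def SFunEq (s : PowerSeries CoefRing) : Prop :=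
  s = (1 + C (R := CoefRing) μ2 * s + C (R := CoefRing) μ4 * s ^ 2 + C (R := CoefRing) μ6 * s ^ 3) * X ^ 2
      + (C (R := CoefRing) μ1 * s + C (R := CoefRing) μ3 * s ^ 2) * X

/-- Embedding of power series into formal Laurent series. -/
abbrev toL : PowerSeries CoefRing →+* LaurentSeries CoefRing :=
  HahnSeries.ofPowerSeries ℤ CoefRing

/-- The Laurent series `t`. -/
def tL : LaurentSeries CoefRing := HahnSeries.single (1 : ℤ) (1 : CoefRing)

/-- Constant Laurent series. -/
abbrev CL : CoefRing →+* LaurentSeries CoefRing := HahnSeries.C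

/-- `IsXY s x y` says: `s` is the canonical solution of the functional equation,
`x = 1/s` (the expansion `x⟨t⟩` of the `x`-coordinate) and `y = -x/t`
(the expansion `y⟨t⟩` of the `y`-coordinate). -/
structure IsXY (s : PowerSeries CoefRing)
    (x y : LaurentSeries CoefRing) : Prop where
  s0 : PowerSeries.constantCoeff (R := CoefRing) s = 0
  seq : SFunEq s
  hx : x * toL s = 1
  hy : y * tL = -x

open PowerSeries

/-- The two-variable power series ring `ℤ[μ⃗][[t₁,t₂]] = (ℤ[μ⃗][[t₁]])[[t₂]]`:
the inner variable is `t₁`, the outer one is `t₂`. -/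
abbrev PS2 : Type := PowerSeries (PowerSeries CoefRing)

/-- `t₁` as an element of `ℤ[μ⃗][[t₁,t₂]]`. -/
def T1 : PS2 := PowerSeries.C (R := PowerSeries CoefRing) PowerSeries.X
/-- `t₂` as an element of `ℤ[μ⃗][[t₁,t₂]]`. -/
def T2 : PS2 := PowerSeries.X
/-- A series `f(t)` regarded as `f(t₁)`. -/
def inT1 (f : PowerSeries CoefRing) : PS2 := PowerSeries.C (R := PowerSeries CoefRing) f
/-- A series `f(t)` regarded as `f(t₂)`. -/
def inT2 (f : PowerSeries CoefRing) : PS2 := PowerSeries.map (PowerSeries.C (R := CoefRing)) f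
/-- The coefficient of `t₁^i t₂^j`. -/
def coeff2 (i j : ℕ) (f : PS2) : CoefRing :=
  PowerSeries.coeff (R := CoefRing) i (PowerSeries.coeff (R := PowerSeries CoefRing) j f)

/-!
In the coordinates `s = 1/x`, `t = -x/y` the curve reads `s = G(s) t² + H(s) t`, a quadratic
equation in `t` whose two roots over `s(t)` are `t` and `t'`. Put `F(σ, τ) = G(σ) τ² + H(σ) τ - σ`.
By Vieta `F(s₂, τ) = G(s₂) (τ - t₂) (τ - t₂')`, while `F(s₁, t₁) = 0`; and
`F(s₂, t₁) - F(s₁, t₁) = -(s₂ - s₁) (1 - D)` with `D` a divided difference that is divisible by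
`t₁`, so `1 - D` is a unit and `p = G(s₂) / (1 - D)`. Setting `t₂ = 0` gives `p(t₁, 0) t₁² = s(t₁)`,
setting `t₁ = 0` gives `p(0, t₂) = G(s(t₂))`, and the listed coefficients come from
`s = t² + μ₁ t³ + (μ₁² + μ₂) t⁴ + ⋯`.
-/

namespace WeierstrassCurve

variable {R : Type*} [CommRing R] (W : WeierstrassCurve R)

/-- In the coordinates `s = 1/x`, `t = -x/y` the Weierstrass equation of `W` becomes
`s = W.quadCoeff s * t ^ 2 + W.linCoeff s * t`. -/
def quadCoeff (s : R) : R := 1 + W.a₂ * s + W.a₄ * s ^ 2 + W.a₆ * s ^ 3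

def linCoeff (s : R) : R := W.a₁ * s + W.a₃ * s ^ 2

/-- The divided difference: `(s₂ - s₁) * W.divDiff s₁ s₂ t` is
`(W.quadCoeff s₂ - W.quadCoeff s₁) * t ^ 2 + (W.linCoeff s₂ - W.linCoeff s₁) * t`. -/
def divDiff (s₁ s₂ t : R) : R :=
  (W.a₂ + W.a₄ * (s₁ + s₂) + W.a₆ * (s₁ ^ 2 + s₁ * s₂ + s₂ ^ 2)) * t ^ 2
    + (W.a₁ + W.a₃ * (s₁ + s₂)) * t

lemma map_quadCoeff {A : Type*} [CommRing A] (f : R →+* A) (s : R) :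
    f (W.quadCoeff s) = (W.map f).quadCoeff (f s) := by
  simp [quadCoeff]

lemma map_linCoeff {A : Type*} [CommRing A] (f : R →+* A) (s : R) :
    f (W.linCoeff s) = (W.map f).linCoeff (f s) := by
  simp [linCoeff]

variable {W}

/-- `ht'` is `t' = x / (y + a₁ x + a₃)`, the involution, written in `s = 1/x` and `t = -x/y`. -/
lemma quadCoeff_mul_mul_eq_neg {s t t' : R} (h : s = W.quadCoeff s * t ^ 2 + W.linCoeff s * t)
    (ht' : t' * ((W.a₁ + W.a₃ * s) * t - 1) = t) (ht : IsLeftRegular t) :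
    W.quadCoeff s * (t * t') = -s := by
  rw [linCoeff] at h
  apply ht
  linear_combination (-t') * h - s * ht'

lemma quadCoeff_mul_add_eq_neg {s t t' : R} (h : s = W.quadCoeff s * t ^ 2 + W.linCoeff s * t)
    (hprod : W.quadCoeff s * (t * t') = -s) (ht : IsLeftRegular t) :
    W.quadCoeff s * (t + t') = -W.linCoeff s := by
  apply ht
  linear_combination hprod - h

lemma sub_mul_one_sub_divDiff {s₁ s₂ t₁ t₂ t₂' : R}
    (h₁ : s₁ = W.quadCoeff s₁ * t₁ ^ 2 + W.linCoeff s₁ * t₁)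
    (hsum : W.quadCoeff s₂ * (t₂ + t₂') = -W.linCoeff s₂)
    (hprod : W.quadCoeff s₂ * (t₂ * t₂') = -s₂) :
    (s₂ - s₁) * (1 - W.divDiff s₁ s₂ t₁) = -((t₂ - t₁) * (t₂' - t₁)) * W.quadCoeff s₂ := by
  unfold divDiff quadCoeff linCoeff at *
  linear_combination -h₁ + hprod - t₁ * hsum

lemma exists_sub_eq_mul {s₁ s₂ t₁ t₂ t₂' : R}
    (h₁ : s₁ = W.quadCoeff s₁ * t₁ ^ 2 + W.linCoeff s₁ * t₁)
    (hsum : W.quadCoeff s₂ * (t₂ + t₂') = -W.linCoeff s₂)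
    (hprod : W.quadCoeff s₂ * (t₂ * t₂') = -s₂) (hu : IsUnit (1 - W.divDiff s₁ s₂ t₁)) :
    ∃ p : R, s₂ - s₁ = -((t₂ - t₁) * (t₂' - t₁)) * p := by
  refine ⟨W.quadCoeff s₂ * ↑hu.unit⁻¹, ?_⟩
  rw [← mul_assoc, ← sub_mul_one_sub_divDiff h₁ hsum hprod, mul_assoc, hu.mul_val_inv, mul_one]

variable (W)

lemma exists_eq_X_sq_mul {s : R⟦X⟧}
    (hs : s = (W.map C).quadCoeff s * X ^ 2 + (W.map C).linCoeff s * X) :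
    ∃ b r : R⟦X⟧, s = X ^ 2 * b ∧ b = 1 + C W.a₁ * X * b + C W.a₂ * X ^ 2 * b + X ^ 3 * r := by
  obtain ⟨u, rfl⟩ : X ∣ s :=
    ⟨(W.map C).quadCoeff s * X + (W.map C).linCoeff s, hs.trans (by ring)⟩
  simp only [quadCoeff, linCoeff, map_a₁, map_a₂, map_a₃, map_a₄, map_a₆] at hs
  obtain ⟨b, rfl⟩ : X ∣ u :=
    ⟨(W.map C).quadCoeff (X * u) + C W.a₁ * u + C W.a₃ * X * u ^ 2,
      X_mul_cancel (by simp only [quadCoeff, map_a₂, map_a₄, map_a₆]; linear_combination hs)⟩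
  refine ⟨b, C W.a₃ * b ^ 2 + C W.a₄ * X * b ^ 2 + C W.a₆ * X ^ 3 * b ^ 3, by ring, ?_⟩
  apply X_mul_cancel
  apply X_mul_cancel
  linear_combination hs

lemma coeff_quadCoeff_X_sq_mul (b : R⟦X⟧) :
    coeff 0 ((W.map C).quadCoeff (X ^ 2 * b)) = 1 ∧
      coeff 2 ((W.map C).quadCoeff (X ^ 2 * b)) = W.a₂ * coeff 0 b ∧
      coeff 3 ((W.map C).quadCoeff (X ^ 2 * b)) = W.a₂ * coeff 1 b := by
  have hG : (W.map C).quadCoeff (X ^ 2 * b)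
      = 1 + X ^ 2 * (C W.a₂ * b + X ^ 2 * (C W.a₄ * b ^ 2 + C W.a₆ * X ^ 2 * b ^ 3)) := by
    simp only [quadCoeff, map_a₂, map_a₄, map_a₆]
    ring
  simp [hG, coeff_X_pow_mul', coeff_one]

end WeierstrassCurve

lemma PowerSeries.coeff_lt_three_of_eq {R : Type*} [CommRing R] {b r : R⟦X⟧} {a c : R}
    (hb : b = 1 + C a * X * b + C c * X ^ 2 * b + X ^ 3 * r) :
    coeff 0 b = 1 ∧ coeff 1 b = a ∧ coeff 2 b = a ^ 2 + c := by
  have hcoeff (n : ℕ) : coeff n b = coeff n (1 + C a * X * b + C c * X ^ 2 * b + X ^ 3 * r) :=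
    congrArg _ hb
  have h0 : coeff 0 b = 1 := by simpa [mul_assoc, coeff_X_pow_mul'] using hcoeff 0
  have h1 : coeff 1 b = a := by simpa [mul_assoc, coeff_X_pow_mul', h0] using hcoeff 1
  refine ⟨h0, h1, ?_⟩
  simpa [mul_assoc, coeff_X_pow_mul', h0, h1, sq, add_comm] using hcoeff 2

lemma PowerSeries.map_comp_C {R S : Type*} [CommRing R] [CommRing S] (f : R →+* S) :
    (map f).comp C = C.comp f :=
  RingHom.ext (map_C f)

@[simps]
def universalCurve : WeierstrassCurve CoefRing := ⟨μ1, μ2, μ3, μ4, μ6⟩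

lemma sFunEq_iff {s : PowerSeries CoefRing} : SFunEq s ↔
    s = (universalCurve.map C).quadCoeff s * X ^ 2 + (universalCurve.map C).linCoeff s * X :=
  Iff.rfl

lemma toL_X : toL X = tL := HahnSeries.ofPowerSeries_X

lemma IsXY.involution_eq {s T' : PowerSeries CoefRing} {x y : LaurentSeries CoefRing}
    (h : IsXY s x y) (hT' : toL T' * (y + CL μ1 * x + CL μ3) = x) :
    T' * ((C μ1 + C μ3 * s) * X - 1) = X := by
  apply HahnSeries.ofPowerSeries_injective (Γ := ℤ)
  simp only [map_mul, map_sub, map_add, map_one, HahnSeries.ofPowerSeries_C, toL_X]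
  -- multiply `hT'` by `s t`, then use `x s = 1` and `y t = -x`
  linear_combination (toL s * tL) * hT' + (toL T' + tL - CL μ1 * tL * toL T') * h.hx
    - (toL T' * toL s) * h.hy

lemma constantCoeff_inT2 (f : PowerSeries CoefRing) :
    constantCoeff (inT2 f) = C (constantCoeff f) := by
  rw [← coeff_zero_eq_constantCoeff_apply, inT2, coeff_map, coeff_zero_eq_constantCoeff_apply]

lemma map_constantCoeff_inT2 (f : PowerSeries CoefRing) : map constantCoeff (inT2 f) = f := by
  rw [inT2, ← RingHom.comp_apply, ← map_comp, constantCoeff_comp_C, PowerSeries.map_id, id]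

lemma coeff2_zero_left (j : ℕ) (f : PS2) : coeff2 0 j f = coeff j (map constantCoeff f) := by
  rw [coeff2, coeff_map, coeff_zero_eq_constantCoeff_apply]

lemma coeff2_zero_right (i : ℕ) (f : PS2) : coeff2 i 0 f = coeff i (constantCoeff f) := by
  rw [coeff2, coeff_zero_eq_constantCoeff_apply]

lemma isUnit_one_sub_divDiff_T1 (W : WeierstrassCurve PS2) (s₁ s₂ : PS2) :
    IsUnit (1 - W.divDiff s₁ s₂ T1) := by
  rw [isUnit_iff_constantCoeff, isUnit_iff_constantCoeff]
  simp [WeierstrassCurve.divDiff, T1]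

lemma exists_inT2_sub_inT1_eq {s T' : PowerSeries CoefRing}
    (hs : s = (universalCurve.map C).quadCoeff s * X ^ 2 + (universalCurve.map C).linCoeff s * X)
    (hsum : (universalCurve.map C).quadCoeff s * (X + T') = -(universalCurve.map C).linCoeff s)
    (hprod : (universalCurve.map C).quadCoeff s * (X * T') = -s) :
    ∃ p : PS2, inT2 s - inT1 s = -((T2 - T1) * (inT2 T' - T1)) * p := by
  have h₁ := congrArg (C (R := PowerSeries CoefRing)) hs
  have hsum₂ := congrArg (map (C (R := CoefRing))) hsum
  have hprod₂ := congrArg (map (C (R := CoefRing))) hprod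
  simp only [map_add, map_mul, map_pow, map_neg, WeierstrassCurve.map_quadCoeff,
    WeierstrassCurve.map_linCoeff, WeierstrassCurve.map_map, map_comp_C, map_X] at h₁ hsum₂ hprod₂
  exact WeierstrassCurve.exists_sub_eq_mul h₁ hsum₂ hprod₂ (isUnit_one_sub_divDiff_T1 _ _ _)

lemma constantCoeff_mul_X_sq_eq {s T' : PowerSeries CoefRing} {p : PS2}
    (hs : constantCoeff s = 0) (hT' : constantCoeff T' = 0)
    (hp : inT2 s - inT1 s = -((T2 - T1) * (inT2 T' - T1)) * p) :
    constantCoeff p * X ^ 2 = s := by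
  have h := congrArg constantCoeff hp
  simp only [map_sub, map_neg, map_mul, constantCoeff_inT2, hs, hT', inT1, T1, T2,
    constantCoeff_C, constantCoeff_X, map_zero] at h
  linear_combination h

lemma map_constantCoeff_eq {s T' g : PowerSeries CoefRing} {p : PS2}
    (hs : constantCoeff s = 0) (hT' : T' ≠ 0) (hprod : g * (X * T') = -s)
    (hp : inT2 s - inT1 s = -((T2 - T1) * (inT2 T' - T1)) * p) :
    map constantCoeff p = g := by
  have h := congrArg (map constantCoeff) hp
  simp only [map_sub, map_neg, map_mul, map_constantCoeff_inT2, inT1, T1, T2, map_C, map_X,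
    constantCoeff_X, hs, map_zero, sub_zero] at h
  exact mul_left_cancel₀ (mul_ne_zero X_ne_zero hT') (by linear_combination h - hprod)

/-- There is a unit `p(t₁,t₂) ∈ ℤ[μ⃗][[t₁,t₂]]` with constant term `1` such that
`1/x⟨t₂⟩ - 1/x⟨t₁⟩ = -(t₂-t₁)(t₂'-t₁)·p(t₁,t₂)` (note `1/x⟨t⟩ = s(t)`);
moreover `p = 1 + μ₁t₁ + μ₂t₂² + (μ₂+μ₁²)t₁² + μ₁μ₂t₂³ + ⋯` and
`p(t₁,0) = (1/x⟨t₁⟩)/t₁²`. -/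
theorem statement7 (s : PowerSeries CoefRing) (x y : LaurentSeries CoefRing)
    (h : IsXY s x y) (T' : PowerSeries CoefRing)
    (hT' : toL T' * (y + CL μ1 * x + CL μ3) = x) :
    ∃ p : PS2,
      inT2 s - inT1 s = -((T2 - T1) * (inT2 T' - T1)) * p ∧
      coeff2 0 0 p = 1 ∧
      coeff2 1 0 p = μ1 ∧
      coeff2 0 2 p = μ2 ∧
      coeff2 2 0 p = μ2 + μ1 ^ 2 ∧
      coeff2 0 3 p = μ1 * μ2 ∧
      (PowerSeries.constantCoeff (R := PowerSeries CoefRing) p) * PowerSeries.X ^ 2 = s := by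
  have hs := sFunEq_iff.mp h.seq
  have hinv := h.involution_eq hT'
  have hT'0 : constantCoeff T' = 0 := by simpa using congrArg constantCoeff hinv
  have hT'ne : T' ≠ 0 := left_ne_zero_of_mul (by rw [hinv]; exact X_ne_zero)
  have hprod := WeierstrassCurve.quadCoeff_mul_mul_eq_neg hs hinv X_mul_injective
  have hsum := WeierstrassCurve.quadCoeff_mul_add_eq_neg hs hprod X_mul_injective
  obtain ⟨p, hp⟩ := exists_inT2_sub_inT1_eq hs hsum hprod
  have hp₀ := constantCoeff_mul_X_sq_eq h.s0 hT'0 hp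
  have hp₁ := map_constantCoeff_eq h.s0 hT'ne hprod hp
  obtain ⟨b, r, rfl, hb⟩ := universalCurve.exists_eq_X_sq_mul hs
  obtain ⟨hb₀, hb₁, hb₂⟩ := PowerSeries.coeff_lt_three_of_eq hb
  obtain ⟨hG₀, hG₂, hG₃⟩ := universalCurve.coeff_quadCoeff_X_sq_mul b
  have hpb : constantCoeff p = b :=
    mul_right_cancel₀ (pow_ne_zero 2 X_ne_zero) (hp₀.trans (mul_comm _ _))
  refine ⟨p, hp, ?_, ?_, ?_, ?_, ?_, hp₀⟩
  · rw [coeff2_zero_left, hp₁, hG₀]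
  · rw [coeff2_zero_right, hpb, hb₁, universalCurve_a₁]
  · rw [coeff2_zero_left, hp₁, hG₂, hb₀, mul_one, universalCurve_a₂]
  · rw [coeff2_zero_right, hpb, hb₂, universalCurve_a₁, universalCurve_a₂, add_comm]
  · rw [coeff2_zero_left, hp₁, hG₃, hb₁, universalCurve_a₁, universalCurve_a₂, mul_comm]
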